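/- Let G=(V,ω) be a connected finite or locally finite weighted graph with ω(x,y)≥ω₀>0 whenever x∼y, with λ₁>0 and ψ₀ := inf_{x∈V}ψ(x) > 0. Fix O∈V and q>0, and assume ∥ρ∥_{L^q} := (Σ_{x∈V}ψ(x)ρ(x)^q)^{1/q}<∞. Let m≥1 be an integer and let u:V→ℝ be a harmonic eigenfunction of −Δ with eigenvalue λ₁ with ∥u∥ := (∫_V(|∇^m u|²+u²)dψ)^{1/2}<∞. Then (Σ_{x∈V}ψ(x)|u(x)|^q)^{1/q} ≤ C*·∥u∥, where C* = max{ 2√2·λ₁^{(1−m)/2}·∥ρ∥_{L^q}/√ω₀ , 2^{1/q+1}·max{∥ρ∥_{L^q}, ψ(O)^{1/q}}/√ψ(O) , 2^{1/q}·max{∥ρ∥_{L^q}, ψ(O)^{1/q}}/√(ψ₀(λ₁^m+1)) }. -/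

import Mathlib

noncomputable section

/-- Vertex measure `ψ(x) = Σ_{y∼x} ω(x,y)` (zero weights contribute nothing). -/
def psiW {V : Type*} (w : V → V → ℝ) (x : V) : ℝ := ∑' y, w x y

/-- Integral `∫_V f dψ = Σ_x ψ(x) f(x)`. -/
def intW {V : Type*} (w : V → V → ℝ) (f : V → ℝ) : ℝ := ∑' x, psiW w x * f x

/-- Graph Laplacian `Δu(x) = (1/ψ(x)) Σ_{y∼x} ω(x,y)(u(y)−u(x))`. -/
def lapW {V : Type*} (w : V → V → ℝ) (u : V → ℝ) : V → ℝ := fun x =>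
  (psiW w x)⁻¹ * ∑' y, w x y * (u y - u x)

/-- Gradient form `Γ(u,v)(x)`. -/
def gammaW {V : Type*} (w : V → V → ℝ) (u v : V → ℝ) (x : V) : ℝ :=
  (2 * psiW w x)⁻¹ * ∑' y, w x y * (u y - u x) * (v y - v x)

/-- `|∇u|(x) = Γ(u,u)(x)^{1/2}`. -/
def gradW {V : Type*} (w : V → V → ℝ) (u : V → ℝ) (x : V) : ℝ :=
  Real.sqrt (gammaW w u u x)

/-- `|∇^m u|(x)`: `|∇(Δ^{(m−1)/2}u)|(x)` for odd `m`, `|Δ^{m/2}u(x)|` for even `m`. -/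
def gradmW {V : Type*} (w : V → V → ℝ) (m : ℕ) (u : V → ℝ) (x : V) : ℝ :=
  if m % 2 = 1 then gradW w ((lapW w)^[(m - 1) / 2] u) x
  else |(lapW w)^[m / 2] u x|

/-- The `p`-Laplacian. -/
def plapW {V : Type*} (w : V → V → ℝ) (p : ℝ) (u : V → ℝ) (x : V) : ℝ :=
  (2 * psiW w x)⁻¹ *
    ∑' y, w x y * (gradW w u y ^ (p - 2) + gradW w u x ^ (p - 2)) * (u y - u x)

/-- Connectedness: any two vertices are joined by a chain of adjacent vertices. -/
def ConnW {V : Type*} (w : V → V → ℝ) : Prop :=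
  ∀ x y : V, Relation.ReflTransGen (fun a b => 0 < w a b) x y

/-- Local finiteness: each vertex has finitely many neighbours. -/
def LocFinW {V : Type*} (w : V → V → ℝ) : Prop :=
  ∀ x : V, {y : V | 0 < w x y}.Finite

/-- The first positive eigenvalue `λ₁` of `−Δ`. -/
def lambda1W {V : Type*} (w : V → V → ℝ) : ℝ :=
  sInf { r : ℝ | ∃ u : V → ℝ, u ≠ 0 ∧
    Summable (fun x => psiW w x * u x ^ 2) ∧
    HasSum (fun x => psiW w x * u x) 0 ∧
    r = intW w (fun x => gradW w u x ^ 2) / intW w (fun x => u x ^ 2) }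

/-- `u` is a harmonic eigenfunction of `−Δ` with eigenvalue `λ₁`. -/
def IsEigW {V : Type*} (w : V → V → ℝ) (u : V → ℝ) : Prop :=
  ∀ x : V, -lapW w u x = lambda1W w * u x

/-- Graph distance `ρ(x)` from `x` to `O`: minimal number of edges in a path. -/
def gdistW {V : Type*} (w : V → V → ℝ) (O x : V) : ℕ :=
  sInf { n : ℕ | ∃ f : ℕ → V, f 0 = O ∧ f n = x ∧ ∀ i < n, 0 < w (f i) (f (i + 1)) }

/-- Boundary `∂Ω` of a domain `Ω`. -/
def bdryW {V : Type*} (w : V → V → ℝ) (Ω : Set V) : Set V :=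
  {x ∈ Ω | ∃ y, y ∉ Ω ∧ 0 < w x y}

/-- Interior `Ω° = Ω ∖ ∂Ω`. -/
def intrW {V : Type*} (w : V → V → ℝ) (Ω : Set V) : Set V := Ω \ bdryW w Ω

/-- `W_0^{m,p}(Ω)` (the underlying set depends only on `m`):
functions vanishing off `Ω` whose gradients of order `< m` vanish on `∂Ω`. -/
def W0 {V : Type*} (w : V → V → ℝ) (Ω : Set V) (m : ℕ) : Set (V → ℝ) :=
  {u | (∀ x, x ∉ Ω → u x = 0) ∧ ∀ x ∈ bdryW w Ω, ∀ i < m, gradmW w i u x = 0}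

/-- The bilinear form `B_m(u,φ)` appearing in the weak formulation of `𝓛_{m,p}`. -/
def BformW {V : Type*} (w : V → V → ℝ) (m : ℕ) (u φ : V → ℝ) (x : V) : ℝ :=
  if m % 2 = 1 then
    gammaW w ((lapW w)^[(m - 1) / 2] u) ((lapW w)^[(m - 1) / 2] φ) x
  else (lapW w)^[m / 2] u x * (lapW w)^[m / 2] φ x

/-- Iterated operator `(−Δ)^m`. -/
def nlapIterW {V : Type*} (w : V → V → ℝ) (m : ℕ) (u : V → ℝ) : V → ℝ :=
  (fun f x => -lapW w f x)^[m] u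


/-- Extract an explicit path from `Relation.ReflTransGen`. -/
lemma rtg_path' {V : Type*} {r : V → V → Prop} {a b : V} (h : Relation.ReflTransGen r a b) :
    ∃ n, ∃ f : ℕ → V, f 0 = a ∧ f n = b ∧ ∀ i < n, r (f i) (f (i + 1)) := by
  induction h with
  | refl => exact ⟨0, fun _ => a, rfl, rfl, fun i hi => by omega⟩
  | @tail b c hab hbc ih =>
    obtain ⟨n, f, h0, hn, hstep⟩ := ih
    refine ⟨n + 1, fun i => if i ≤ n then f i else c, by simp [h0], by simp, ?_⟩
    intro i hi
    rcases Nat.lt_or_ge i n with h | h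
    · simpa [Nat.le_of_lt h, Nat.succ_le_of_lt h] using hstep i h
    · have : i = n := by omega
      subst this
      simpa [hn] using hbc

section finAux
variable {V : Type*} [Fintype V]

lemma psiW_eq' (w : V → V → ℝ) (x : V) : psiW w x = ∑ y, w x y := tsum_fintype _

lemma lapW_eq' (w : V → V → ℝ) (u : V → ℝ) (x : V) :
    lapW w u x = (psiW w x)⁻¹ * ∑ y, w x y * (u y - u x) := by
  unfold lapW; rw [tsum_fintype]

lemma gammaW_eq' (w : V → V → ℝ) (u v : V → ℝ) (x : V) :
    gammaW w u v x = (2 * psiW w x)⁻¹ * ∑ y, w x y * (u y - u x) * (v y - v x) := by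
  unfold gammaW; rw [tsum_fintype]

lemma lapW_smul' (w : V → V → ℝ) (c : ℝ) (u : V → ℝ) :
    lapW w (fun y => c * u y) = fun x => c * lapW w u x := by
  funext x
  rw [lapW_eq', lapW_eq']
  rw [show (∑ y, w x y * (c * u y - c * u x)) = c * ∑ y, w x y * (u y - u x) by
    rw [Finset.mul_sum]; exact Finset.sum_congr rfl fun y _ => by ring]
  ring

lemma iter_lap' (w : V → V → ℝ) (u : V → ℝ) (lam : ℝ)
    (h : ∀ x, lapW w u x = -lam * u x) (k : ℕ) :
    (lapW w)^[k] u = fun x => (-lam) ^ k * u x := by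
  induction k with
  | zero => simp
  | succ k ih =>
    rw [Function.iterate_succ_apply', ih, lapW_smul']
    funext x
    rw [h x, pow_succ]
    ring

lemma gammaW_nonneg' (w : V → V → ℝ) (hnn : ∀ x y, 0 ≤ w x y) (hψ : ∀ x, 0 < psiW w x)
    (u : V → ℝ) (x : V) : 0 ≤ gammaW w u u x := by
  rw [gammaW_eq']
  apply mul_nonneg
  · exact inv_nonneg.mpr (by linarith [hψ x])
  · exact Finset.sum_nonneg fun y _ => by
      have := hnn x y; nlinarith [sq_nonneg (u y - u x)]

lemma gradW_sq' (w : V → V → ℝ) (hnn : ∀ x y, 0 ≤ w x y) (hψ : ∀ x, 0 < psiW w x)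
    (u : V → ℝ) (x : V) : gradW w u x ^ 2 = gammaW w u u x :=
  Real.sq_sqrt (gammaW_nonneg' w hnn hψ u x)

lemma gradW_smul' (w : V → V → ℝ) (c : ℝ) (u : V → ℝ) (x : V) :
    gradW w (fun y => c * u y) x = |c| * gradW w u x := by
  unfold gradW
  rw [gammaW_eq', gammaW_eq',
    show (∑ y, w x y * (c * u y - c * u x) * (c * u y - c * u x))
      = c ^ 2 * ∑ y, w x y * (u y - u x) * (u y - u x) by
      rw [Finset.mul_sum]; exact Finset.sum_congr rfl fun y _ => by ring,
    show (2 * psiW w x)⁻¹ * (c ^ 2 * ∑ y, w x y * (u y - u x) * (u y - u x))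
      = c ^ 2 * ((2 * psiW w x)⁻¹ * ∑ y, w x y * (u y - u x) * (u y - u x)) by ring,
    Real.sqrt_mul (sq_nonneg c), Real.sqrt_sq_eq_abs]

lemma green' (w : V → V → ℝ) (hsymm : ∀ x y, w x y = w y x) (hnn : ∀ x y, 0 ≤ w x y)
    (hψ : ∀ x, 0 < psiW w x) (u : V → ℝ) (lam : ℝ)
    (heig : ∀ x, lapW w u x = -lam * u x) :
    ∑ x, psiW w x * gradW w u x ^ 2 = lam * ∑ x, psiW w x * u x ^ 2 := by
  have hS : ∀ x, (∑ y, w x y * (u y - u x)) = psiW w x * (-lam * u x) := by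
    intro x
    have h := heig x
    rw [lapW_eq'] at h
    exact (inv_mul_eq_iff_eq_mul₀ (hψ x).ne').mp h
  have key : ∑ x, ∑ y, w x y * (u y - u x) * u y
      = - ∑ x, ∑ y, w x y * (u y - u x) * u x := by
    calc ∑ x, ∑ y, w x y * (u y - u x) * u y
        = ∑ y, ∑ x, w x y * (u y - u x) * u y := Finset.sum_comm
      _ = ∑ x, ∑ y, -(w x y * (u y - u x) * u x) := by
          refine Finset.sum_congr rfl fun x _ => Finset.sum_congr rfl fun y _ => ?_
          rw [hsymm y x]; ring
      _ = - ∑ x, ∑ y, w x y * (u y - u x) * u x := by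
          simp [Finset.sum_neg_distrib]
  have lhs : ∑ x, psiW w x * gradW w u x ^ 2
      = 2⁻¹ * ∑ x, ∑ y, w x y * (u y - u x) * (u y - u x) := by
    rw [Finset.mul_sum]
    refine Finset.sum_congr rfl fun x _ => ?_
    rw [gradW_sq' w hnn hψ, gammaW_eq']
    have h0 : psiW w x ≠ 0 := (hψ x).ne'
    field_simp
  have expand : ∑ x, ∑ y, w x y * (u y - u x) * (u y - u x)
      = (∑ x, ∑ y, w x y * (u y - u x) * u y) - ∑ x, ∑ y, w x y * (u y - u x) * u x := by
    rw [← Finset.sum_sub_distrib]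
    refine Finset.sum_congr rfl fun x _ => ?_
    rw [← Finset.sum_sub_distrib]
    exact Finset.sum_congr rfl fun y _ => by ring
  have hB : ∑ x, ∑ y, w x y * (u y - u x) * u x = -lam * ∑ x, psiW w x * u x ^ 2 := by
    rw [Finset.mul_sum]
    refine Finset.sum_congr rfl fun x _ => ?_
    rw [show (∑ y, w x y * (u y - u x) * u x) = (∑ y, w x y * (u y - u x)) * u x from
      (Finset.sum_mul _ _ _).symm, hS x]
    ring
  rw [lhs, expand, key, hB]
  ring

end finAux

/-- Sobolev-type `L^q` bound for eigenfunctions. -/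
theorem eigenfunction_Lq_bound {V : Type*} [Countable V] (w : V → V → ℝ)
    (hsymm : ∀ x y, w x y = w y x) (hnn : ∀ x y, 0 ≤ w x y)
    (hlf : LocFinW w) (hψ : ∀ x, 0 < psiW w x) (hconn : ConnW w)
    (ω₀ : ℝ) (hω₀ : 0 < ω₀) (hedge : ∀ x y, 0 < w x y → ω₀ ≤ w x y)
    (hlam : 0 < lambda1W w)
    (ψ₀ : ℝ) (hψ₀ : ψ₀ = ⨅ x, psiW w x) (hψ₀pos : 0 < ψ₀)
    (O : V) (q : ℝ) (hq : 0 < q) (m : ℕ) (hm : 1 ≤ m)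
    (hρsum : Summable (fun x => psiW w x * (gdistW w O x : ℝ) ^ q))
    (nρ : ℝ) (hnρ : nρ = (∑' x, psiW w x * (gdistW w O x : ℝ) ^ q) ^ (1 / q))
    (CStar : ℝ)
    (hCStar : CStar =
      max (2 * Real.sqrt 2 * lambda1W w ^ ((1 - (m : ℝ)) / 2) * nρ / Real.sqrt ω₀)
        (max ((2 : ℝ) ^ (1 / q + 1) * max nρ (psiW w O ^ (1 / q)) / Real.sqrt (psiW w O))
          ((2 : ℝ) ^ (1 / q) * max nρ (psiW w O ^ (1 / q)) /
            Real.sqrt (ψ₀ * (lambda1W w ^ m + 1)))))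
    (u : V → ℝ) (hu : IsEigW w u)
    (hsum : Summable (fun y => psiW w y * (gradmW w m u y ^ 2 + u y ^ 2))) :
    Summable (fun x => psiW w x * |u x| ^ q) ∧
    (∑' x, psiW w x * |u x| ^ q) ^ (1 / q) ≤
      CStar * Real.sqrt (∑' y, psiW w y * (gradmW w m u y ^ 2 + u y ^ 2)) := by
  classical
  set lam := lambda1W w with hlamdef
  have heig : ∀ x, lapW w u x = -lam * u x := fun x => by
    have h := hu x; simp only [hlamdef]; linarith
  have hψ₀le : ∀ x, ψ₀ ≤ psiW w x := fun x =>
    hψ₀ ▸ ciInf_le ⟨0, by rintro _ ⟨y, rfl⟩; exact (hψ y).le⟩ x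
  -- distance from O is at least 1 off O
  have hdist : ∀ x : V, x ≠ O → 1 ≤ gdistW w O x := by
    intro x hx
    by_contra hcon
    have h0 : gdistW w O x = 0 := by omega
    unfold gdistW at h0
    have hne : {n : ℕ | ∃ f : ℕ → V, f 0 = O ∧ f n = x ∧
        ∀ i < n, 0 < w (f i) (f (i + 1))}.Nonempty := by
      obtain ⟨n, f, h1, h2, h3⟩ := rtg_path' (hconn O x)
      exact ⟨n, f, h1, h2, h3⟩
    have hmem := Nat.sInf_mem hne
    rw [h0] at hmem
    obtain ⟨f, hf0, hfn, -⟩ := hmem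
    exact hx (hfn ▸ hf0 ▸ rfl)
  -- V is finite
  have hfinV : Finite V := by
    have hev : ∀ᶠ x in Filter.cofinite, psiW w x * (gdistW w O x : ℝ) ^ q < ψ₀ :=
      hρsum.tendsto_cofinite_zero.eventually_lt_const hψ₀pos
    rw [Filter.eventually_cofinite] at hev
    have hsub : (Set.univ : Set V) ⊆
        {x | ¬ psiW w x * (gdistW w O x : ℝ) ^ q < ψ₀} ∪ {O} := by
      intro x _
      by_cases hx : x = O
      · exact Or.inr hx
      · left
        have h1 : (1 : ℝ) ≤ (gdistW w O x : ℝ) := by exact_mod_cast hdist x hx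
        have h2 : (1 : ℝ) ≤ (gdistW w O x : ℝ) ^ q := Real.one_le_rpow h1 hq.le
        have h3 := hψ₀le x
        simp only [Set.mem_setOf_eq, not_lt]
        nlinarith
    have : (Set.univ : Set V).Finite :=
      Set.Finite.subset (hev.union (Set.finite_singleton O)) hsub
    exact Set.finite_univ_iff.mp this
  haveI := hfinV
  haveI : Fintype V := Fintype.ofFinite V
  -- key sums
  set S2 := ∑ x, psiW w x * u x ^ 2 with hS2
  have hS2nn : 0 ≤ S2 :=
    Finset.sum_nonneg fun x _ => mul_nonneg (hψ x).le (sq_nonneg _)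
  have hgreen := green' w hsymm hnn hψ u lam heig
  have hlp : 0 < lam ^ m + 1 := by positivity
  have hgm : ∑ x, psiW w x * gradmW w m u x ^ 2 = lam ^ m * S2 := by
    rcases Nat.even_or_odd m with he | ho
    · have hm2 : m % 2 ≠ 1 := by rcases he with ⟨k, hk⟩; omega
      have hiter := iter_lap' w u lam heig (m / 2)
      have hx : ∀ x, gradmW w m u x ^ 2 = lam ^ m * u x ^ 2 := by
        intro x
        unfold gradmW
        rw [if_neg hm2, hiter]
        have hpow : ((-lam) ^ (m / 2)) ^ 2 = lam ^ m := by
          rw [← pow_mul, Nat.div_mul_cancel he.two_dvd, he.neg_pow]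
        calc |(-lam) ^ (m / 2) * u x| ^ 2 = ((-lam) ^ (m / 2)) ^ 2 * u x ^ 2 := by
              rw [sq_abs, mul_pow]
          _ = lam ^ m * u x ^ 2 := by rw [hpow]
      calc ∑ x, psiW w x * gradmW w m u x ^ 2
          = ∑ x, lam ^ m * (psiW w x * u x ^ 2) := by
            refine Finset.sum_congr rfl fun x _ => ?_; rw [hx x]; ring
        _ = lam ^ m * S2 := by rw [← Finset.mul_sum]
    · have hm2 : m % 2 = 1 := Nat.odd_iff.mp ho
      have heven : Even (m - 1) := by
        rcases ho with ⟨k, hk⟩; exact ⟨k, by omega⟩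
      have hiter := iter_lap' w u lam heig ((m - 1) / 2)
      have hx : ∀ x, gradmW w m u x ^ 2 = lam ^ (m - 1) * gradW w u x ^ 2 := by
        intro x
        unfold gradmW
        rw [if_pos hm2, hiter, gradW_smul']
        have hpow : ((-lam) ^ ((m - 1) / 2)) ^ 2 = lam ^ (m - 1) := by
          rw [← pow_mul, Nat.div_mul_cancel heven.two_dvd, heven.neg_pow]
        calc (|(-lam) ^ ((m - 1) / 2)| * gradW w u x) ^ 2
            = ((-lam) ^ ((m - 1) / 2)) ^ 2 * gradW w u x ^ 2 := by
              rw [mul_pow, sq_abs]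
          _ = lam ^ (m - 1) * gradW w u x ^ 2 := by rw [hpow]
      calc ∑ x, psiW w x * gradmW w m u x ^ 2
          = ∑ x, lam ^ (m - 1) * (psiW w x * gradW w u x ^ 2) := by
            refine Finset.sum_congr rfl fun x _ => ?_; rw [hx x]; ring
        _ = lam ^ (m - 1) * ∑ x, psiW w x * gradW w u x ^ 2 := by rw [← Finset.mul_sum]
        _ = lam ^ (m - 1) * (lam * S2) := by rw [hgreen]
        _ = lam ^ (m - 1 + 1) * S2 := by rw [pow_succ]; ring
        _ = lam ^ m * S2 := by rw [Nat.sub_add_cancel hm]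
  set N := ∑' y, psiW w y * (gradmW w m u y ^ 2 + u y ^ 2) with hN
  have hNs : N = (lam ^ m + 1) * S2 := by
    rw [hN, tsum_fintype]
    calc ∑ y, psiW w y * (gradmW w m u y ^ 2 + u y ^ 2)
        = ∑ y, (psiW w y * gradmW w m u y ^ 2 + psiW w y * u y ^ 2) := by
          refine Finset.sum_congr rfl fun y _ => ?_; ring
      _ = (∑ y, psiW w y * gradmW w m u y ^ 2) + ∑ y, psiW w y * u y ^ 2 :=
          Finset.sum_add_distrib
      _ = lam ^ m * S2 + S2 := by rw [hgm, hS2]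
      _ = (lam ^ m + 1) * S2 := by ring
  -- bound on total measure
  set T := (∑' x, psiW w x * (gdistW w O x : ℝ) ^ q) with hT
  have hTnn : 0 ≤ T :=
    tsum_nonneg fun x => mul_nonneg (hψ x).le (Real.rpow_nonneg (Nat.cast_nonneg _) q)
  set M := max T (psiW w O) with hM
  have hMpos : 0 < M := lt_max_iff.mpr (Or.inr (hψ O))
  have hsumψ : ∑ x, psiW w x ≤ 2 * M := by
    have h1 : ∑ x ∈ Finset.univ.erase O, psiW w x ≤ T := by
      rw [hT, tsum_fintype]
      calc ∑ x ∈ Finset.univ.erase O, psiW w x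
          ≤ ∑ x ∈ Finset.univ.erase O, psiW w x * (gdistW w O x : ℝ) ^ q := by
            refine Finset.sum_le_sum fun x hx => ?_
            have hxO : x ≠ O := Finset.ne_of_mem_erase hx
            have h1 : (1 : ℝ) ≤ (gdistW w O x : ℝ) := by exact_mod_cast hdist x hxO
            have h2 : (1 : ℝ) ≤ (gdistW w O x : ℝ) ^ q := Real.one_le_rpow h1 hq.le
            nlinarith [(hψ x).le]
        _ ≤ ∑ x, psiW w x * (gdistW w O x : ℝ) ^ q := by
            refine Finset.sum_le_sum_of_subset_of_nonneg (Finset.subset_univ _)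
              fun x _ _ => mul_nonneg (hψ x).le (Real.rpow_nonneg (Nat.cast_nonneg _) q)
    have h2 : ∑ x, psiW w x = psiW w O + ∑ x ∈ Finset.univ.erase O, psiW w x :=
      (Finset.add_sum_erase _ _ (Finset.mem_univ O)).symm
    have h3 := le_max_left T (psiW w O)
    have h4 := le_max_right T (psiW w O)
    rw [← hM] at h3 h4
    linarith
  -- pointwise bound
  set b := Real.sqrt (S2 / ψ₀) with hb
  have hbnn : 0 ≤ b := Real.sqrt_nonneg _
  have hub : ∀ x, |u x| ≤ b := by
    intro x
    have h1 : psiW w x * u x ^ 2 ≤ S2 :=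
      Finset.single_le_sum (f := fun y => psiW w y * u y ^ 2)
        (fun y _ => mul_nonneg (hψ y).le (sq_nonneg _)) (Finset.mem_univ x)
    have h2 : u x ^ 2 ≤ S2 / ψ₀ := by
      rw [le_div_iff₀ hψ₀pos]
      nlinarith [hψ₀le x, sq_nonneg (u x)]
    calc |u x| = Real.sqrt (u x ^ 2) := (Real.sqrt_sq_eq_abs _).symm
      _ ≤ b := Real.sqrt_le_sqrt h2
  refine ⟨Summable.of_finite, ?_⟩
  have hLnn : 0 ≤ ∑' x, psiW w x * |u x| ^ q :=
    tsum_nonneg fun x => mul_nonneg (hψ x).le (Real.rpow_nonneg (abs_nonneg _) q)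
  have hsum1 : (∑' x, psiW w x * |u x| ^ q) ≤ 2 * M * b ^ q := by
    rw [tsum_fintype]
    calc ∑ x, psiW w x * |u x| ^ q
        ≤ ∑ x, psiW w x * b ^ q := by
          refine Finset.sum_le_sum fun x _ => ?_
          exact mul_le_mul_of_nonneg_left
            (Real.rpow_le_rpow (abs_nonneg _) (hub x) hq.le) (hψ x).le
      _ = (∑ x, psiW w x) * b ^ q := by rw [← Finset.sum_mul]
      _ ≤ 2 * M * b ^ q :=
          mul_le_mul_of_nonneg_right hsumψ (Real.rpow_nonneg hbnn q)
  have hstep : (∑' x, psiW w x * |u x| ^ q) ^ (1 / q) ≤ (2 * M * b ^ q) ^ (1 / q) :=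
    Real.rpow_le_rpow hLnn hsum1 (by positivity)
  have hrhs : (2 * M * b ^ q) ^ (1 / q) = 2 ^ (1 / q) * M ^ (1 / q) * b := by
    rw [Real.mul_rpow (by positivity : (0:ℝ) ≤ 2 * M) (Real.rpow_nonneg hbnn q),
      Real.mul_rpow (by norm_num : (0:ℝ) ≤ 2) hMpos.le]
    congr 1
    rw [← Real.rpow_mul hbnn, mul_one_div_cancel hq.ne', Real.rpow_one]
  have hMq : M ^ (1 / q) = max nρ (psiW w O ^ (1 / q)) := by
    rw [hnρ]
    rcases le_total T (psiW w O) with h | h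
    · rw [hM, max_eq_right h,
        max_eq_right (Real.rpow_le_rpow hTnn h (by positivity))]
    · rw [hM, max_eq_left h,
        max_eq_left (Real.rpow_le_rpow (hψ O).le h (by positivity))]
  have hbN : b = Real.sqrt N / Real.sqrt (ψ₀ * (lam ^ m + 1)) := by
    rw [hb, hNs, Real.sqrt_div hS2nn, Real.sqrt_mul hlp.le, Real.sqrt_mul hψ₀pos.le]
    have hp : 0 < Real.sqrt (lam ^ m + 1) := Real.sqrt_pos.mpr hlp
    have hp2 : 0 < Real.sqrt ψ₀ := Real.sqrt_pos.mpr hψ₀pos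
    field_simp
  have hC3 : 2 ^ (1 / q) * max nρ (psiW w O ^ (1 / q)) /
      Real.sqrt (ψ₀ * (lam ^ m + 1)) ≤ CStar := by
    rw [hCStar]
    exact le_trans (le_max_right _ _) (le_max_right _ _)
  have final : 2 ^ (1 / q) * M ^ (1 / q) * b ≤ CStar * Real.sqrt N := by
    rw [hMq, hbN]
    have hNrt : 0 ≤ Real.sqrt N := Real.sqrt_nonneg _
    calc 2 ^ (1 / q) * max nρ (psiW w O ^ (1 / q)) *
          (Real.sqrt N / Real.sqrt (ψ₀ * (lam ^ m + 1)))
        = (2 ^ (1 / q) * max nρ (psiW w O ^ (1 / q)) /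
            Real.sqrt (ψ₀ * (lam ^ m + 1))) * Real.sqrt N := by ring
      _ ≤ CStar * Real.sqrt N := mul_le_mul_of_nonneg_right hC3 hNrt
  exact le_trans (hstep.trans_eq hrhs) final
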